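/- arXiv:2006.07894 — 2 statements merged into one kernel-verified Lean document; each statement's English description precedes it below -/
import Mathlib

section
/- For any integers l, N with 1 ≤ l ≤ N, the sum over all tuples α = (α_1, ..., α_N) of nonnegative integers with α_1 + ... + α_N = l of the product α_1! · α_2! ··· α_N! is at most (2N)^l. -/
/-!
Each summand is at most `l!`, since `l! / ∏ αⱼ!` is a multinomial coefficient. There are
`C(N + l - 1, l)` summands (stars and bars), so the sum is at most
`C(N + l - 1, l) * l! = (N + l - 1)(N + l - 2)⋯N ≤ (N + l - 1)^l ≤ (2N)^l`.
-/

open Finset Nat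

theorem Finset.Nat.card_antidiagonalTuple (k n : ℕ) :
    #(antidiagonalTuple k n) = (k + n - 1).choose n := by
  classical
  have h := card_finsuppAntidiag_nat_eq_choose (s := (univ : Finset (Fin k))) n
  rwa [finsuppAntidiag, card_map, card_attach, piAntidiag_univ_fin_eq_antidiagonalTuple, card_univ,
    Fintype.card_fin] at h

theorem Nat.prod_factorial_le_factorial_sum {ι : Type*} (s : Finset ι) (f : ι → ℕ) :
    ∏ i ∈ s, (f i)! ≤ (∑ i ∈ s, f i)! :=
  le_of_dvd (factorial_pos _) (prod_factorial_dvd_factorial_sum s f)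

theorem Finset.Nat.sum_prod_factorial_antidiagonalTuple_le (k n : ℕ) :
    ∑ α ∈ antidiagonalTuple k n, ∏ j, (α j)! ≤ (k + n - 1).descFactorial n :=
  calc ∑ α ∈ antidiagonalTuple k n, ∏ j, (α j)!
      ≤ ∑ _α ∈ antidiagonalTuple k n, n ! := sum_le_sum fun α hα => by
        simpa [(mem_antidiagonalTuple.mp hα)] using prod_factorial_le_factorial_sum univ α
    _ = (k + n - 1).choose n * n ! := by rw [sum_const, smul_eq_mul, card_antidiagonalTuple]
    _ = (k + n - 1).descFactorial n := by rw [descFactorial_eq_factorial_mul_choose, mul_comm]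

theorem factorial_sum_bound_general (l N : ℕ) (h2 : l ≤ N) :
    ∑ α ∈ Finset.Nat.antidiagonalTuple N l, ∏ j, Nat.factorial (α j) ≤ (2 * N) ^ l :=
  calc ∑ α ∈ antidiagonalTuple N l, ∏ j, (α j)!
      ≤ (N + l - 1).descFactorial l := sum_prod_factorial_antidiagonalTuple_le N l
    _ ≤ (N + l - 1) ^ l := descFactorial_le_pow _ _
    _ ≤ (2 * N) ^ l := Nat.pow_le_pow_left (by omega) l

theorem factorial_sum_bound (l N : ℕ) (h1 : 1 ≤ l) (h2 : l ≤ N) :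
    ∑ α ∈ Finset.Nat.antidiagonalTuple N l, ∏ j, Nat.factorial (α j) ≤ (2 * N) ^ l :=
  factorial_sum_bound_general l N h2
end

section
/- Let ν ≥ 1, C₁ > 0, ρ > 0, ω ∈ ℝ^ν, T > 0, and suppose c, h : [0,T] × ℤ^ν → ℂ are continuous in t, satisfy |c(t,n)| ≤ C₁·exp(-ρ|n|) and |h(t,n)| ≤ C₁·exp(-ρ|n|) for all t, n, agree at t = 0 together with their t-derivatives, and both satisfy the integral equation c(t,n) = (linear part determined by c(0,n), c_t(0,n)) - [i(n·ω)/(2√(1+(n·ω)²))]·∫₀ᵗ (exp(iλ(τ-t)) - exp(iλ(t-τ)))·Σ_{m₁+m₂=n} c(τ,m₁)c(τ,m₂) dτ with λ = ((n·ω)²+(n·ω)⁴)^{1/2}. Then there is t₁ > 0, depending only on ν, C₁, ρ, |ω|, such that c(t,n) = h(t,n) for all 0 ≤ t ≤ t₁ and all n ∈ ℤ^ν. -/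
noncomputable section

/-- The ℓ¹-norm of an integer vector, as a real number. -/
def l1Z {ν : ℕ} (n : Fin ν → ℤ) : ℝ := ∑ j, |(n j : ℝ)|

/-- The ℓ¹-norm of a real vector. -/
def l1R {ν : ℕ} (ω : Fin ν → ℝ) : ℝ := ∑ j, |ω j|

/-- The pairing n·ω = Σ_j n_j ω_j. -/
def dotp {ν : ℕ} (n : Fin ν → ℤ) (ω : Fin ν → ℝ) : ℝ := ∑ j, (n j : ℝ) * ω j

/-- λ = ((n·ω)² + (n·ω)⁴)^{1/2}. -/
def lam {ν : ℕ} (n : Fin ν → ℤ) (ω : Fin ν → ℝ) : ℝ :=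
  Real.sqrt ((dotp n ω) ^ 2 + (dotp n ω) ^ 4)

/-- The Duhamel integral equation for the Fourier coefficients of the good
Boussinesq equation with quasi-periodic data, on the time interval [0, T]. -/
def SolvesIE {ν : ℕ} (ω : Fin ν → ℝ) (T : ℝ) (c : ℝ → (Fin ν → ℤ) → ℂ) : Prop :=
  ∀ n : Fin ν → ℤ, ∀ t ∈ Set.Icc (0:ℝ) T,
    c t n =
      (c 0 n / 2) * (Complex.exp (Complex.I * (lam n ω : ℂ) * (t : ℂ))
        + Complex.exp (-(Complex.I * (lam n ω : ℂ) * (t : ℂ))))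
      - (Complex.I * (deriv (fun s => c s n) 0) / (2 * (lam n ω : ℂ))) *
          (Complex.exp (Complex.I * (lam n ω : ℂ) * (t : ℂ))
            - Complex.exp (-(Complex.I * (lam n ω : ℂ) * (t : ℂ))))
      - (Complex.I * (dotp n ω : ℂ) / (2 * (Real.sqrt (1 + (dotp n ω) ^ 2) : ℂ))) *
          ∫ τ in (0:ℝ)..t,
            (Complex.exp (Complex.I * (lam n ω : ℂ) * ((τ : ℂ) - (t : ℂ)))
              - Complex.exp (Complex.I * (lam n ω : ℂ) * ((t : ℂ) - (τ : ℂ)))) *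
            ∑' m : Fin ν → ℤ, c τ m * c τ (n - m)

/-! The difference `d = c - h` is controlled in the weighted norm
`sup_{t ≤ t₁, n} e^{σ|n|} |d(t,n)|` with `σ = ρ/2`. Subtracting the two Duhamel equations, the
linear parts cancel, the prefactor has modulus `≤ 1/2` and the oscillating kernel `≤ 2`. The
quadratic term splits as `c ∗ d + h ∗ d`, and since `c, h` decay at rate `ρ ≥ 2σ` each such
convolution is bounded by `C₁ M S e^{-σ|n|}`, where `S = Σ_m e^{-σ|m|}` and `M` bounds the
weighted norm of `d`. So every bound `M` improves to `2 C₁ S t₁ M ≤ M/2`, which forces `d = 0`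
on `[0, t₁]`. -/

section

variable {ν : ℕ}

lemma l1Z_nonneg (n : Fin ν → ℤ) : 0 ≤ l1Z n :=
  Finset.sum_nonneg fun _ _ => abs_nonneg _

lemma l1Z_le_add_sub (n m : Fin ν → ℤ) : l1Z n ≤ l1Z m + l1Z (n - m) := by
  unfold l1Z
  rw [← Finset.sum_add_distrib]
  refine Finset.sum_le_sum fun j _ => ?_
  simpa using abs_add_le (m j : ℝ) ((n - m) j : ℝ)

lemma summable_exp_neg_mul_abs_int {a : ℝ} (ha : 0 < a) :
    Summable fun k : ℤ => Real.exp (-a * |(k : ℝ)|) := by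
  have h : Summable fun n : ℕ => Real.exp (n * -a) :=
    Real.summable_exp_nat_mul_iff.mpr (by linarith)
  refine Summable.of_nat_of_neg (h.congr fun n => ?_) (h.congr fun n => ?_) <;> simp [mul_comm]

lemma summable_exp_l1Z {a : ℝ} (ha : 0 < a) :
    Summable fun m : Fin ν → ℤ => Real.exp (-a * l1Z m) := by
  induction ν with
  | zero => exact Summable.of_finite
  | succ ν ih =>
    have hprod : Summable fun p : ℤ × (Fin ν → ℤ) =>
        Real.exp (-a * |(p.1 : ℝ)|) * Real.exp (-a * l1Z p.2) :=
      (summable_exp_neg_mul_abs_int ha).mul_of_nonneg ih (fun _ => (Real.exp_pos _).le)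
        (fun _ => (Real.exp_pos _).le)
    refine ((Fin.consEquiv fun _ => ℤ).symm.summable_iff.mpr hprod).congr fun m => ?_
    simp only [Function.comp_apply, Fin.consEquiv_symm_apply, ← Real.exp_add, l1Z,
      Fin.sum_univ_succ, Fin.tail]
    ring_nf

lemma norm_sub_le_of_exp_bounds {C ρ σ : ℝ} {x y : ℂ} {m : Fin ν → ℤ} (hσρ : σ ≤ ρ)
    (hx : ‖x‖ ≤ C * Real.exp (-ρ * l1Z m)) (hy : ‖y‖ ≤ C * Real.exp (-ρ * l1Z m)) :
    ‖x - y‖ ≤ 2 * C * Real.exp (-σ * l1Z m) := by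
  have hC : 0 ≤ C := nonneg_of_mul_nonneg_left ((norm_nonneg x).trans hx) (Real.exp_pos _)
  have hdecay : Real.exp (-ρ * l1Z m) ≤ Real.exp (-σ * l1Z m) :=
    Real.exp_le_exp.mpr (by nlinarith [l1Z_nonneg m])
  calc ‖x - y‖ ≤ ‖x‖ + ‖y‖ := norm_sub_le x y
    _ ≤ 2 * C * Real.exp (-ρ * l1Z m) := by linarith
    _ ≤ 2 * C * Real.exp (-σ * l1Z m) := by gcongr

lemma norm_mul_le_of_exp_bounds {A B a b : ℝ} {x y : ℂ} {m k : Fin ν → ℤ}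
    (hb : 0 ≤ b) (hx : ‖x‖ ≤ A * Real.exp (-a * l1Z m))
    (hy : ‖y‖ ≤ B * Real.exp (-b * l1Z k)) :
    ‖x * y‖ ≤ A * B * Real.exp (-a * l1Z m) := by
  have hB : 0 ≤ B := nonneg_of_mul_nonneg_left ((norm_nonneg y).trans hy) (Real.exp_pos _)
  have hdecay : Real.exp (-b * l1Z k) ≤ 1 :=
    Real.exp_le_one_iff.mpr (by nlinarith [l1Z_nonneg k])
  calc ‖x * y‖ = ‖x‖ * ‖y‖ := norm_mul x y
    _ ≤ A * Real.exp (-a * l1Z m) * (B * 1) :=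
      mul_le_mul hx (hy.trans (by gcongr)) (norm_nonneg y) ((norm_nonneg x).trans hx)
    _ = A * B * Real.exp (-a * l1Z m) := by ring

/-- The weight inequality behind the convolution estimate: the right-hand side decays in `n`
and is summable in `m`. -/
lemma exp_l1Z_mul_exp_l1Z_sub_le {σ ρ : ℝ} (hσ : 0 ≤ σ) (hσρ : 2 * σ ≤ ρ) (n m : Fin ν → ℤ) :
    Real.exp (-ρ * l1Z m) * Real.exp (-σ * l1Z (n - m))
      ≤ Real.exp (-σ * l1Z n) * Real.exp (-σ * l1Z m) := by
  rw [← Real.exp_add, ← Real.exp_add, Real.exp_le_exp]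
  nlinarith [mul_le_mul_of_nonneg_left (l1Z_le_add_sub n m) hσ,
    mul_nonneg (sub_nonneg.mpr hσρ) (l1Z_nonneg m)]

def coeffConv (f g : (Fin ν → ℤ) → ℂ) (n : Fin ν → ℤ) : ℂ :=
  ∑' m, f m * g (n - m)

lemma coeffConv_comm (f g : (Fin ν → ℤ) → ℂ) (n : Fin ν → ℤ) :
    coeffConv f g n = coeffConv g f n := by
  unfold coeffConv
  rw [← (Equiv.subLeft n).tsum_eq]
  simp [mul_comm]

lemma summable_coeffConv_of_exp_bounds {A B a b : ℝ} {f g : (Fin ν → ℤ) → ℂ}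
    (ha : 0 < a) (hb : 0 ≤ b) (hf : ∀ m, ‖f m‖ ≤ A * Real.exp (-a * l1Z m))
    (hg : ∀ m, ‖g m‖ ≤ B * Real.exp (-b * l1Z m)) (n : Fin ν → ℤ) :
    Summable fun m => f m * g (n - m) :=
  ((summable_exp_l1Z ha).mul_left (A * B)).of_norm_bounded fun m =>
    norm_mul_le_of_exp_bounds hb (hf m) (hg (n - m))

lemma norm_coeffConv_le {C M σ ρ : ℝ} {f g : (Fin ν → ℤ) → ℂ} (hσ : 0 < σ)
    (hσρ : 2 * σ ≤ ρ) (hf : ∀ m, ‖f m‖ ≤ C * Real.exp (-ρ * l1Z m))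
    (hg : ∀ m, ‖g m‖ ≤ M * Real.exp (-σ * l1Z m)) (n : Fin ν → ℤ) :
    ‖coeffConv f g n‖
      ≤ C * M * (∑' m : Fin ν → ℤ, Real.exp (-σ * l1Z m)) * Real.exp (-σ * l1Z n) := by
  have hterm : ∀ m, ‖f m * g (n - m)‖
      ≤ C * M * Real.exp (-σ * l1Z n) * Real.exp (-σ * l1Z m) := fun m => by
    have hC : 0 ≤ C := nonneg_of_mul_nonneg_left ((norm_nonneg _).trans (hf m)) (Real.exp_pos _)
    have hM : 0 ≤ M := nonneg_of_mul_nonneg_left ((norm_nonneg _).trans (hg m)) (Real.exp_pos _)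
    calc ‖f m * g (n - m)‖ = ‖f m‖ * ‖g (n - m)‖ := norm_mul _ _
      _ ≤ C * Real.exp (-ρ * l1Z m) * (M * Real.exp (-σ * l1Z (n - m))) :=
        mul_le_mul (hf m) (hg (n - m)) (norm_nonneg _) (by positivity)
      _ = C * M * (Real.exp (-ρ * l1Z m) * Real.exp (-σ * l1Z (n - m))) := by ring
      _ ≤ C * M * (Real.exp (-σ * l1Z n) * Real.exp (-σ * l1Z m)) :=
        mul_le_mul_of_nonneg_left (exp_l1Z_mul_exp_l1Z_sub_le hσ.le hσρ n m)
          (mul_nonneg hC hM)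
      _ = C * M * Real.exp (-σ * l1Z n) * Real.exp (-σ * l1Z m) := by ring
  refine (tsum_of_norm_bounded ((summable_exp_l1Z hσ).mul_left _).hasSum hterm).trans_eq ?_
  rw [tsum_mul_left]
  ring

lemma norm_coeffConv_self_sub_le {C M σ ρ : ℝ} {f g : (Fin ν → ℤ) → ℂ}
    (hσ : 0 < σ) (hσρ : 2 * σ ≤ ρ) (hf : ∀ m, ‖f m‖ ≤ C * Real.exp (-ρ * l1Z m))
    (hg : ∀ m, ‖g m‖ ≤ C * Real.exp (-ρ * l1Z m))
    (hfg : ∀ m, ‖f m - g m‖ ≤ M * Real.exp (-σ * l1Z m)) (n : Fin ν → ℤ) :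
    ‖coeffConv f f n - coeffConv g g n‖
      ≤ 2 * C * M * (∑' m : Fin ν → ℤ, Real.exp (-σ * l1Z m)) * Real.exp (-σ * l1Z n) := by
  have hρ : 0 < ρ := by linarith
  have hsplit : coeffConv f f n - coeffConv g g n
      = coeffConv f (fun m => f m - g m) n + coeffConv g (fun m => f m - g m) n := by
    rw [coeffConv_comm g (fun m => f m - g m)]
    unfold coeffConv
    beta_reduce
    rw [← (summable_coeffConv_of_exp_bounds hρ hρ.le hf hf n).tsum_sub
        (summable_coeffConv_of_exp_bounds hρ hρ.le hg hg n),
      ← (summable_coeffConv_of_exp_bounds hρ hσ.le hf hfg n).tsum_add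
        (summable_coeffConv_of_exp_bounds hσ hρ.le hfg hg n)]
    congr 1 with m
    ring
  rw [hsplit]
  refine (norm_add_le _ _).trans ?_
  linarith [norm_coeffConv_le hσ hσρ hf hfg n, norm_coeffConv_le hσ hσρ hg hfg n]

lemma continuousOn_coeffConv {C ρ : ℝ} {s : Set ℝ} {c : ℝ → (Fin ν → ℤ) → ℂ}
    (hρ : 0 < ρ) (hc : ∀ n, ContinuousOn (fun t => c t n) s)
    (hcb : ∀ t ∈ s, ∀ n, ‖c t n‖ ≤ C * Real.exp (-ρ * l1Z n)) (n : Fin ν → ℤ) :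
    ContinuousOn (fun t => coeffConv (c t) (c t) n) s :=
  continuousOn_tsum (fun m => (hc m).mul (hc (n - m)))
    ((summable_exp_l1Z hρ).mul_left (C * C)) fun m t ht =>
      norm_mul_le_of_exp_bounds hρ.le (hcb t ht m) (hcb t ht (n - m))

def duhamelKernel (l t τ : ℝ) : ℂ :=
  Complex.exp (Complex.I * (l : ℂ) * ((τ : ℂ) - (t : ℂ)))
    - Complex.exp (Complex.I * (l : ℂ) * ((t : ℂ) - (τ : ℂ)))

def couplingCoeff (x : ℝ) : ℂ :=
  Complex.I * (x : ℂ) / (2 * (Real.sqrt (1 + x ^ 2) : ℂ))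

lemma norm_duhamelKernel_le (l t τ : ℝ) : ‖duhamelKernel l t τ‖ ≤ 2 := by
  refine (norm_sub_le _ _).trans ?_
  simp [Complex.norm_exp]
  norm_num

lemma norm_couplingCoeff_le (x : ℝ) : ‖couplingCoeff x‖ ≤ 1 / 2 := by
  have hsqrt : |x| ≤ Real.sqrt (1 + x ^ 2) := by
    rw [← Real.sqrt_sq_eq_abs]
    exact Real.sqrt_le_sqrt (by linarith)
  have hpos : 0 < Real.sqrt (1 + x ^ 2) := Real.sqrt_pos.mpr (by positivity)
  rw [couplingCoeff, norm_div, norm_mul, norm_mul, Complex.norm_I, Complex.norm_two,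
    Complex.norm_real, Complex.norm_real, Real.norm_eq_abs, Real.norm_eq_abs,
    abs_of_pos hpos, div_le_iff₀ (by positivity)]
  linarith

lemma norm_integral_duhamelKernel_mul_le {l t B : ℝ} {F : ℝ → ℂ} (ht : 0 ≤ t)
    (hF : ∀ τ ∈ Set.Icc 0 t, ‖F τ‖ ≤ B) :
    ‖∫ τ in (0:ℝ)..t, duhamelKernel l t τ * F τ‖ ≤ 2 * B * t := by
  have hbound : ∀ τ ∈ Set.uIoc 0 t, ‖duhamelKernel l t τ * F τ‖ ≤ 2 * B := by
    intro τ hτ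
    rw [Set.uIoc_of_le ht] at hτ
    rw [norm_mul]
    exact mul_le_mul (norm_duhamelKernel_le l t τ) (hF τ (Set.Ioc_subset_Icc_self hτ))
      (norm_nonneg _) zero_le_two
  simpa [abs_of_nonneg ht] using
    intervalIntegral.norm_integral_le_of_norm_le_const hbound

section SolvesIE

variable {ω : Fin ν → ℝ} {T t : ℝ} {c h : ℝ → (Fin ν → ℤ) → ℂ} {n : Fin ν → ℤ}

lemma SolvesIE.sub_eq_integral (hc : SolvesIE ω T c) (hh : SolvesIE ω T h)
    (h0 : c 0 n = h 0 n) (h0' : deriv (fun s => c s n) 0 = deriv (fun s => h s n) 0)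
    (ht : t ∈ Set.Icc 0 T)
    (hcc : ContinuousOn (fun τ => coeffConv (c τ) (c τ) n) (Set.Icc 0 t))
    (hhc : ContinuousOn (fun τ => coeffConv (h τ) (h τ) n) (Set.Icc 0 t)) :
    c t n - h t n = couplingCoeff (dotp n ω) * ∫ τ in (0:ℝ)..t,
      duhamelKernel (lam n ω) t τ * (coeffConv (h τ) (h τ) n - coeffConv (c τ) (c τ) n) := by
  have hK : Continuous (duhamelKernel (lam n ω) t) := by unfold duhamelKernel; fun_prop
  have hint : ∀ F : ℝ → ℂ, ContinuousOn F (Set.Icc 0 t) →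
      IntervalIntegrable (fun τ => duhamelKernel (lam n ω) t τ * F τ)
        MeasureTheory.volume 0 t :=
    fun F hF => (hK.continuousOn.mul hF).intervalIntegrable_of_Icc ht.1
  simp only [mul_sub]
  rw [intervalIntegral.integral_sub (hint _ hhc) (hint _ hcc), hc n t ht, hh n t ht, h0, h0']
  unfold couplingCoeff duhamelKernel coeffConv
  ring

lemma SolvesIE.norm_sub_le {C ρ σ M : ℝ} (hc : SolvesIE ω T c) (hh : SolvesIE ω T h)
    (hσ : 0 < σ) (hσρ : 2 * σ ≤ ρ)
    (hc_cont : ∀ n, ContinuousOn (fun t => c t n) (Set.Icc 0 T))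
    (hh_cont : ∀ n, ContinuousOn (fun t => h t n) (Set.Icc 0 T))
    (hcb : ∀ t ∈ Set.Icc (0:ℝ) T, ∀ n, ‖c t n‖ ≤ C * Real.exp (-ρ * l1Z n))
    (hhb : ∀ t ∈ Set.Icc (0:ℝ) T, ∀ n, ‖h t n‖ ≤ C * Real.exp (-ρ * l1Z n))
    (h0 : c 0 n = h 0 n) (h0' : deriv (fun s => c s n) 0 = deriv (fun s => h s n) 0)
    (ht : t ∈ Set.Icc 0 T)
    (hM : ∀ τ ∈ Set.Icc 0 t, ∀ m, ‖c τ m - h τ m‖ ≤ M * Real.exp (-σ * l1Z m)) :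
    ‖c t n - h t n‖ ≤ t * (2 * C * M * (∑' m : Fin ν → ℤ, Real.exp (-σ * l1Z m))
      * Real.exp (-σ * l1Z n)) := by
  have hρ : 0 < ρ := by linarith
  have hsub : Set.Icc 0 t ⊆ Set.Icc 0 T := Set.Icc_subset_Icc_right ht.2
  have hconv : ∀ τ ∈ Set.Icc 0 t, ‖coeffConv (h τ) (h τ) n - coeffConv (c τ) (c τ) n‖
      ≤ 2 * C * M * (∑' m : Fin ν → ℤ, Real.exp (-σ * l1Z m)) * Real.exp (-σ * l1Z n) :=
    fun τ hτ => by
      rw [norm_sub_rev]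
      exact norm_coeffConv_self_sub_le hσ hσρ (hcb τ (hsub hτ)) (hhb τ (hsub hτ))
        (hM τ hτ) n
  rw [SolvesIE.sub_eq_integral hc hh h0 h0' ht
    ((continuousOn_coeffConv hρ hc_cont hcb n).mono hsub)
    ((continuousOn_coeffConv hρ hh_cont hhb n).mono hsub), norm_mul]
  refine (mul_le_mul (norm_couplingCoeff_le _) (norm_integral_duhamelKernel_mul_le ht.1 hconv)
    (norm_nonneg _) (by norm_num)).trans_eq ?_
  ring

end SolvesIE

end

lemma le_zero_of_weighted_bound_contracts {α : Type*} {u e : α → ℝ} {M₀ q : ℝ}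
    (hM₀ : 0 ≤ M₀) (hq₀ : 0 ≤ q) (hq₁ : q < 1) (h₀ : ∀ x, u x ≤ M₀ * e x)
    (hstep : ∀ M, 0 ≤ M → (∀ x, u x ≤ M * e x) → ∀ x, u x ≤ q * M * e x) (x : α) :
    u x ≤ 0 := by
  have hiter : ∀ k : ℕ, ∀ x, u x ≤ q ^ k * M₀ * e x := by
    intro k
    induction k with
    | zero => simpa using h₀
    | succ k ih =>
      simpa [pow_succ, mul_comm, mul_assoc, mul_left_comm] using hstep _ (by positivity) ih
  have hlim : Filter.Tendsto (fun k : ℕ => q ^ k * M₀ * e x) Filter.atTop (nhds 0) := by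
    simpa using
      ((tendsto_pow_atTop_nhds_zero_of_lt_one hq₀ hq₁).mul_const M₀).mul_const (e x)
  exact ge_of_tendsto' hlim fun k => hiter k x

theorem boussinesq_local_uniqueness_general {ν : ℕ} (C₁ ρ T : ℝ)
    (hC : 0 < C₁) (hρ : 0 < ρ) (hT : 0 < T) (ω : Fin ν → ℝ)
    (c h : ℝ → (Fin ν → ℤ) → ℂ)
    (hc_cont : ∀ n, ContinuousOn (fun t => c t n) (Set.Icc 0 T))
    (hh_cont : ∀ n, ContinuousOn (fun t => h t n) (Set.Icc 0 T))
    (hcb : ∀ t ∈ Set.Icc (0:ℝ) T, ∀ n, ‖c t n‖ ≤ C₁ * Real.exp (-ρ * l1Z n))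
    (hhb : ∀ t ∈ Set.Icc (0:ℝ) T, ∀ n, ‖h t n‖ ≤ C₁ * Real.exp (-ρ * l1Z n))
    (h0 : ∀ n, c 0 n = h 0 n)
    (h0' : ∀ n, deriv (fun s => c s n) 0 = deriv (fun s => h s n) 0)
    (hcIE : SolvesIE ω T c) (hhIE : SolvesIE ω T h) :
    ∃ t₁ > 0, ∀ t ∈ Set.Icc (0:ℝ) t₁, ∀ n, c t n = h t n := by
  obtain ⟨σ, hσ, hσρ⟩ : ∃ σ, 0 < σ ∧ 2 * σ ≤ ρ := ⟨ρ / 2, by positivity, by linarith⟩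
  set S := ∑' m : Fin ν → ℤ, Real.exp (-σ * l1Z m)
  have hS : 0 < S :=
    (summable_exp_l1Z hσ).tsum_pos (fun _ => (Real.exp_pos _).le) 0 (Real.exp_pos _)
  set t₁ := min T (1 / (4 * C₁ * S))
  have hq : 2 * C₁ * S * t₁ ≤ 1 / 2 := by
    have : t₁ ≤ 1 / (4 * C₁ * S) := min_le_right _ _
    rw [le_div_iff₀ (by positivity)] at this
    linarith
  have hsub : ∀ τ ∈ Set.Icc 0 t₁, τ ∈ Set.Icc 0 T :=
    fun τ hτ => ⟨hτ.1, hτ.2.trans (min_le_left _ _)⟩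
  refine ⟨t₁, lt_min hT (by positivity), fun t ht n => ?_⟩
  suffices ‖c t n - h t n‖ ≤ 0 from sub_eq_zero.mp (norm_le_zero_iff.mp this)
  refine le_zero_of_weighted_bound_contracts
    (u := fun p : Set.Icc 0 t₁ × (Fin ν → ℤ) => ‖c p.1 p.2 - h p.1 p.2‖)
    (e := fun p => Real.exp (-σ * l1Z p.2)) (M₀ := 2 * C₁) (q := 1 / 2)
    (by positivity) (by norm_num) (by norm_num) ?_ ?_ (⟨t, ht⟩, n)
  · rintro ⟨⟨τ, hτ⟩, m⟩
    exact norm_sub_le_of_exp_bounds (by linarith) (hcb τ (hsub τ hτ) m) (hhb τ (hsub τ hτ) m)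
  · rintro M hM hbound ⟨⟨τ, hτ⟩, m⟩
    calc ‖c τ m - h τ m‖ ≤ τ * (2 * C₁ * M * S * Real.exp (-σ * l1Z m)) :=
          hcIE.norm_sub_le hhIE hσ hσρ hc_cont hh_cont hcb hhb (h0 m) (h0' m) (hsub τ hτ)
            fun τ' hτ' m' => hbound (⟨τ', hτ'.1, hτ'.2.trans hτ.2⟩, m')
      _ = (2 * C₁ * S * τ) * (M * Real.exp (-σ * l1Z m)) := by ring
      _ ≤ 1 / 2 * (M * Real.exp (-σ * l1Z m)) := by
          gcongr
          exact (mul_le_mul_of_nonneg_left hτ.2 (by positivity)).trans hq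
      _ = 1 / 2 * M * Real.exp (-σ * l1Z m) := by ring

theorem boussinesq_local_uniqueness {ν : ℕ} (hν : 1 ≤ ν) (C₁ ρ T : ℝ)
    (hC : 0 < C₁) (hρ : 0 < ρ) (hT : 0 < T) (ω : Fin ν → ℝ)
    (c h : ℝ → (Fin ν → ℤ) → ℂ)
    (hc_cont : ∀ n, ContinuousOn (fun t => c t n) (Set.Icc 0 T))
    (hh_cont : ∀ n, ContinuousOn (fun t => h t n) (Set.Icc 0 T))
    (hcb : ∀ t ∈ Set.Icc (0:ℝ) T, ∀ n, ‖c t n‖ ≤ C₁ * Real.exp (-ρ * l1Z n))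
    (hhb : ∀ t ∈ Set.Icc (0:ℝ) T, ∀ n, ‖h t n‖ ≤ C₁ * Real.exp (-ρ * l1Z n))
    (h0 : ∀ n, c 0 n = h 0 n)
    (h0' : ∀ n, deriv (fun s => c s n) 0 = deriv (fun s => h s n) 0)
    (hcIE : SolvesIE ω T c) (hhIE : SolvesIE ω T h) :
    ∃ t₁ > 0, ∀ t ∈ Set.Icc (0:ℝ) t₁, ∀ n, c t n = h t n :=
  boussinesq_local_uniqueness_general C₁ ρ T hC hρ hT ω c h hc_cont hh_cont hcb hhb h0 h0' hcIE hhIE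
end
end
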